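/- Let G be a finitely generated abelian sub-semigroup of K_{η,r}(ℂ). If J_G(v) = ℂⁿ for some v ∈ U = ∏_{k=1}^r (ℂ* × ℂ^{n_k−1}), then the orbit G(v) is dense in ℂⁿ. -/

import Mathlib

open Filter Topology Matrix

/-- `n × n` lower triangular complex matrices whose diagonal entries are all equal. -/
def IsTn {n : ℕ} (A : Matrix (Fin n) (Fin n) ℂ) : Prop :=
  (∀ i j : Fin n, i < j → A i j = 0) ∧ ∀ i j : Fin n, A i i = A j j

/-- `F_G`: the span of the vectors `(B - μ_B I) e_i`, `B ∈ G`, `1 ≤ i ≤ n-1`. -/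
noncomputable def FG {n : ℕ} (G : Set (Matrix (Fin n) (Fin n) ℂ)) : Submodule ℂ (Fin n → ℂ) :=
  Submodule.span ℂ {v | ∃ B ∈ G, ∃ i : Fin n, (i : ℕ) < n - 1 ∧
    v = (B - B i i • (1 : Matrix (Fin n) (Fin n) ℂ)).mulVec (Pi.single i 1)}

/-- The sub-semigroup generated by matrices `A 1, …, A p`. -/
def genSG {n p : ℕ} (A : Fin p → Matrix (Fin n) (Fin n) ℂ) :
    Set (Matrix (Fin n) (Fin n) ℂ) :=
  {B | ∃ k : Fin p → ℕ, 0 < ∑ j, k j ∧ B = (List.ofFn fun j => A j ^ k j).prod}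

/-- The extended limit set `J_G(x)` for the semigroup generated by `A 1, …, A p`. -/
def JSet {n p : ℕ} (A : Fin p → Matrix (Fin n) (Fin n) ℂ) (x : Fin n → ℂ) :
    Set (Fin n → ℂ) :=
  {y | ∃ (xs : ℕ → Fin n → ℂ) (k : ℕ → Fin p → ℕ),
    Tendsto (fun m => ∑ j, k m j) atTop atTop ∧
    Tendsto xs atTop (𝓝 x) ∧
    Tendsto (fun m => ((List.ofFn fun j => A j ^ k m j).prod).mulVec (xs m)) atTop (𝓝 y)}

/-- The sub-semigroup of block matrices generated by blockwise generators. -/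
def genSGB {r p : ℕ} {nn : Fin r → ℕ}
    (A : Fin p → ((k : Fin r) → Matrix (Fin (nn k)) (Fin (nn k)) ℂ)) :
    Set ((k : Fin r) → Matrix (Fin (nn k)) (Fin (nn k)) ℂ) :=
  {B | ∃ km : Fin p → ℕ, 0 < ∑ j, km j ∧
    B = fun k => (List.ofFn fun j => A j k ^ km j).prod}

/-- The extended limit set for a semigroup of block-diagonal matrices, acting blockwise
on `ℂⁿ = ∏ k, ℂ^{n_k}`. -/
def JSetB {r p : ℕ} {nn : Fin r → ℕ}
    (A : Fin p → ((k : Fin r) → Matrix (Fin (nn k)) (Fin (nn k)) ℂ))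
    (x : (k : Fin r) → Fin (nn k) → ℂ) : Set ((k : Fin r) → Fin (nn k) → ℂ) :=
  {y | ∃ (xs : ℕ → (k : Fin r) → Fin (nn k) → ℂ) (km : ℕ → Fin p → ℕ),
    Tendsto (fun m => ∑ j, km m j) atTop atTop ∧
    Tendsto xs atTop (𝓝 x) ∧
    Tendsto (fun m k => ((List.ofFn fun j => A j k ^ km m j).prod).mulVec (xs m k))
      atTop (𝓝 y)}

section AuxTn

/-- Lower triangular with all diagonal entries equal to `c`. -/
def IsTnD {n : ℕ} (A : Matrix (Fin n) (Fin n) ℂ) (c : ℂ) : Prop :=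
  (∀ i j : Fin n, i < j → A i j = 0) ∧ ∀ i, A i i = c

lemma isTnD_one {n : ℕ} : IsTnD (1 : Matrix (Fin n) (Fin n) ℂ) 1 :=
  ⟨fun _ _ h => Matrix.one_apply_ne (ne_of_lt h), fun i => Matrix.one_apply_eq i⟩

lemma IsTnD.mul {n : ℕ} {A B : Matrix (Fin n) (Fin n) ℂ} {c d : ℂ}
    (hA : IsTnD A c) (hB : IsTnD B d) : IsTnD (A * B) (c * d) := by
  constructor
  · intro i j hij
    rw [Matrix.mul_apply]
    refine Finset.sum_eq_zero fun l _ => ?_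
    rcases lt_or_ge i l with h | h
    · rw [hA.1 i l h, zero_mul]
    · rw [hB.1 l j (lt_of_le_of_lt h hij), mul_zero]
  · intro i
    rw [Matrix.mul_apply]
    rw [Finset.sum_eq_single i ?_ ?_]
    · rw [hA.2 i, hB.2 i]
    · intro l _ hl
      rcases lt_or_gt_of_ne hl with h | h
      · rw [hB.1 l i h, mul_zero]
      · rw [hA.1 i l h, zero_mul]
    · intro h; exact absurd (Finset.mem_univ i) h

lemma IsTnD.pow {n : ℕ} {A : Matrix (Fin n) (Fin n) ℂ} {c : ℂ} (hA : IsTnD A c) :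
    ∀ t : ℕ, IsTnD (A ^ t) (c ^ t)
  | 0 => by simpa using isTnD_one
  | t + 1 => by rw [pow_succ, pow_succ]; exact (hA.pow t).mul hA

lemma IsTnD.mulVec_zero' {n : ℕ} {A : Matrix (Fin n) (Fin n) ℂ} {c : ℂ}
    (hA : IsTnD A c) (hn : 0 < n) (u : Fin n → ℂ) :
    A.mulVec u ⟨0, hn⟩ = c * u ⟨0, hn⟩ := by
  have h0 : A.mulVec u ⟨0, hn⟩ = ∑ j, A ⟨0, hn⟩ j * u j := by
    simp [Matrix.mulVec, dotProduct]
  rw [h0, Finset.sum_eq_single ⟨0, hn⟩ ?_ ?_]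
  · rw [hA.2]
  · intro j _ hj
    have hlt : (⟨0, hn⟩ : Fin n) < j := by
      rcases Nat.eq_zero_or_pos j.val with h | h
      · exact absurd (Fin.ext h) hj
      · exact h
    rw [hA.1 _ _ hlt, zero_mul]
  · intro h; exact absurd (Finset.mem_univ _) h

lemma prop_listProd {Mo : Type*} [Monoid Mo] (P : Mo → ℂ → Prop)
    (hone : P 1 1) (hmul : ∀ a b c d, P a c → P b d → P (a * b) (c * d)) :
    ∀ l : List (Mo × ℂ), (∀ x ∈ l, P x.1 x.2) →
      P (l.map Prod.fst).prod (l.map Prod.snd).prod := by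
  intro l
  induction l with
  | nil => intro _; simpa using hone
  | cons a t ih =>
    intro h
    simp only [List.map_cons, List.prod_cons]
    exact hmul _ _ _ _ (h a (List.mem_cons_self)) (ih fun x hx => h x (List.mem_cons_of_mem a hx))

lemma prop_ofFn_prod {Mo : Type*} [Monoid Mo] (P : Mo → ℂ → Prop)
    (hone : P 1 1) (hmul : ∀ a b c d, P a c → P b d → P (a * b) (c * d))
    {q : ℕ} (f : Fin q → Mo) (c : Fin q → ℂ) (h : ∀ j, P (f j) (c j)) :
    P (List.ofFn f).prod (∏ j, c j) := by
  have h2 := prop_listProd P hone hmul (List.ofFn fun j => (f j, c j)) ?_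
  · rw [List.map_ofFn, List.map_ofFn] at h2
    rw [← List.prod_ofFn (f := c)]
    exact h2
  · intro x hx
    rw [List.mem_ofFn] at hx
    obtain ⟨j, rfl⟩ := hx
    exact h j

lemma exists_common_eigenvector : ∀ {p : ℕ} (V : Type) [AddCommGroup V] [Module ℂ V]
    [FiniteDimensional ℂ V] [Nontrivial V] (f : Fin p → Module.End ℂ V),
    (∀ i j, Commute (f i) (f j)) →
    ∃ x : V, x ≠ 0 ∧ ∀ j, ∃ α : ℂ, f j x = α • x
  | 0, V, _, _, _, _, _, _ => by
      obtain ⟨x, hx⟩ := exists_ne (0 : V)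
      exact ⟨x, hx, fun j => j.elim0⟩
  | (q + 1), V, _, _, _, _, f, hf => by
      obtain ⟨μ, hμ⟩ := Module.End.exists_eigenvalue (f 0)
      set K := Module.End.eigenspace (f 0) μ with hK
      haveI : Nontrivial K := Submodule.nontrivial_iff_ne_bot.mpr hμ
      have hinv : ∀ j : Fin q, ∀ x ∈ K, f j.succ x ∈ K := by
        intro j x hx
        rw [hK, Module.End.mem_eigenspace_iff] at hx ⊢
        have hc := LinearMap.ext_iff.mp (hf 0 j.succ) x
        simp only [Module.End.mul_apply] at hc
        rw [hc, hx, _root_.map_smul]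
      let g : Fin q → Module.End ℂ K := fun j => (f j.succ).restrict (hinv j)
      have hg : ∀ i j, Commute (g i) (g j) := by
        intro i j
        apply LinearMap.ext; intro x
        apply Subtype.ext
        have hc := LinearMap.ext_iff.mp (hf i.succ j.succ) (x : V)
        simp only [Module.End.mul_apply] at hc ⊢
        simp only [g, LinearMap.restrict_coe_apply]
        exact hc
      obtain ⟨x, hx0, hx⟩ := exists_common_eigenvector K g hg
      refine ⟨(x : V), by simpa using hx0, ?_⟩
      intro j
      refine Fin.cases ?_ ?_ j
      · exact ⟨μ, Module.End.mem_eigenspace_iff.mp x.2⟩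
      · intro i
        obtain ⟨α, hα⟩ := hx i
        refine ⟨α, ?_⟩
        have := congrArg (Subtype.val) hα
        simpa [g, LinearMap.restrict_coe_apply] using this

end AuxTn

section AuxB
variable {r p : ℕ} {nn : Fin r → ℕ}

/-- blockwise action of a tuple of matrices on a tuple of vectors -/
noncomputable def mvB (B : (k : Fin r) → Matrix (Fin (nn k)) (Fin (nn k)) ℂ)
    (x : (k : Fin r) → Fin (nn k) → ℂ) : (k : Fin r) → Fin (nn k) → ℂ :=
  fun k => (B k).mulVec (x k)

lemma mvB_mul (B C : (k : Fin r) → Matrix (Fin (nn k)) (Fin (nn k)) ℂ)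
    (x : (k : Fin r) → Fin (nn k) → ℂ) : mvB (B * C) x = mvB B (mvB C x) :=
  funext fun k => (Matrix.mulVec_mulVec (x k) (B k) (C k)).symm

lemma mvB_one (x : (k : Fin r) → Fin (nn k) → ℂ) : mvB 1 x = x :=
  funext fun k => Matrix.one_mulVec (x k)

/-- the blockwise product of powers as an element of the product ring -/
noncomputable def PP (A : Fin p → ((k : Fin r) → Matrix (Fin (nn k)) (Fin (nn k)) ℂ)) (km : Fin p → ℕ) :
    (k : Fin r) → Matrix (Fin (nn k)) (Fin (nn k)) ℂ :=
  (List.ofFn fun j => A j ^ km j).prod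

lemma PP_apply (A : Fin p → ((k : Fin r) → Matrix (Fin (nn k)) (Fin (nn k)) ℂ))
    (km : Fin p → ℕ) (k : Fin r) :
    PP A km k = (List.ofFn fun j => A j k ^ km j).prod := by
  show Pi.evalMonoidHom (fun k => Matrix (Fin (nn k)) (Fin (nn k)) ℂ) k
      ((List.ofFn fun j => A j ^ km j).prod) = _
  rw [map_list_prod, List.map_ofFn]
  congr 1

/-- blockwise multiplication as a linear endomorphism -/
noncomputable def blockL (B : (k : Fin r) → Matrix (Fin (nn k)) (Fin (nn k)) ℂ) :
    ((k : Fin r) → Fin (nn k) → ℂ) →ₗ[ℂ] ((k : Fin r) → Fin (nn k) → ℂ) where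
  toFun x := mvB B x
  map_add' x y := funext fun k => Matrix.mulVec_add (B k) (x k) (y k)
  map_smul' a x := funext fun k => Matrix.mulVec_smul (B k) a (x k)

/-- evaluation at a fixed vector, as a linear map on the matrix side -/
noncomputable def vecPhi (v : (k : Fin r) → Fin (nn k) → ℂ) :
    ((k : Fin r) → Matrix (Fin (nn k)) (Fin (nn k)) ℂ) →ₗ[ℂ] ((k : Fin r) → Fin (nn k) → ℂ) where
  toFun B := mvB B v
  map_add' B C := funext fun k => Matrix.add_mulVec (B k) (C k) (v k)
  map_smul' a B := funext fun k => Matrix.smul_mulVec a (B k) (v k)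

end AuxB

set_option maxHeartbeats 2000000

/-- Theorem 1.2: if `G` is a finitely generated abelian sub-semigroup of `K_{η,r}(ℂ)` and
`J_G(v) = ℂⁿ` for some `v ∈ U`, then the orbit `G(v)` is dense in `ℂⁿ`. -/
theorem stmt11 (r p : ℕ) (nn : Fin r → ℕ) (hpos : ∀ k, 0 < nn k)
    (A : Fin p → ((k : Fin r) → Matrix (Fin (nn k)) (Fin (nn k)) ℂ))
    (hT : ∀ j k, IsTn (A j k))
    (hcomm : ∀ i j k, A i k * A j k = A j k * A i k)
    (v : (k : Fin r) → Fin (nn k) → ℂ) (hv : ∀ k, v k ⟨0, hpos k⟩ ≠ 0)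
    (hJ : JSetB A v = Set.univ) :
    Dense {w : (k : Fin r) → Fin (nn k) → ℂ |
      ∃ B ∈ genSGB A, w = fun k => (B k).mulVec (v k)} := by
  classical
  rcases Nat.eq_zero_or_pos p with hp | hp
  · exfalso
    subst hp
    have h0 : (0 : (k : Fin r) → Fin (nn k) → ℂ) ∈ JSetB A v := by rw [hJ]; trivial
    obtain ⟨xs, km, h1, -, -⟩ := h0
    obtain ⟨m, hm⟩ := (h1.eventually_gt_atTop 0).exists
    simp at hm
  rcases Nat.eq_zero_or_pos r with hr | hr
  · subst hr
    intro x
    have hmem : (fun k => ((List.ofFn fun j => A j k ^ (Pi.single (⟨0, hp⟩ : Fin p) 1) j).prod).mulVec (v k)) ∈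
        {w : (k : Fin 0) → Fin (nn k) → ℂ | ∃ B ∈ genSGB A, w = fun k => (B k).mulVec (v k)} := by
      refine ⟨_, ⟨Pi.single ⟨0, hp⟩ 1, by simp, rfl⟩, rfl⟩
    have hx : x = (fun k => ((List.ofFn fun j => A j k ^ (Pi.single (⟨0, hp⟩ : Fin p) 1) j).prod).mulVec (v k)) :=
      funext fun k => k.elim0
    rw [hx]
    exact subset_closure hmem
  -- main case
  -- diagonal values
  set μ : Fin p → Fin r → ℂ := fun j k => A j k ⟨0, hpos k⟩ ⟨0, hpos k⟩ with hμdef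
  have hTnD : ∀ j k, IsTnD (A j k) (μ j k) := fun j k =>
    ⟨(hT j k).1, fun i => (hT j k).2 i ⟨0, hpos k⟩⟩
  have hPPD : ∀ (km : Fin p → ℕ) (k : Fin r), IsTnD (PP A km k) (∏ j, μ j k ^ km j) := by
    intro km k
    rw [PP_apply]
    exact prop_ofFn_prod IsTnD isTnD_one (fun a b c d h1 h2 => h1.mul h2) _ _
      (fun j => (hTnD j k).pow (km j))
  -- algebra
  set Alg : Subalgebra ℂ ((k : Fin r) → Matrix (Fin (nn k)) (Fin (nn k)) ℂ) :=
    Algebra.adjoin ℂ (Set.range A) with hAlgdef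
  have hAlgA : ∀ j, A j ∈ Alg := fun j => Algebra.subset_adjoin ⟨j, rfl⟩
  have hAcomm : ∀ i j, A i * A j = A j * A i := by
    intro i j; funext k; exact hcomm i j k
  have hAlgComm : ∀ a ∈ Alg, ∀ b ∈ Alg, a * b = b * a := by
    intro a ha b hb
    have key : ∀ y ∈ Set.range A, Commute a y := by
      rintro y ⟨j, rfl⟩
      refine (Algebra.commute_of_mem_adjoin_of_forall_mem_commute ha ?_).symm
      rintro x ⟨i, rfl⟩
      exact hAcomm j i
    exact Algebra.commute_of_mem_adjoin_of_forall_mem_commute hb key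
  have hPPmem : ∀ km, PP A km ∈ Alg := by
    intro km
    refine Subalgebra.list_prod_mem _ ?_
    intro x hx
    rw [List.mem_ofFn] at hx
    obtain ⟨j, rfl⟩ := hx
    exact pow_mem (hAlgA j) _
  -- the orbit subspace
  set W : Submodule ℂ ((k : Fin r) → Fin (nn k) → ℂ) :=
    Submodule.map (vecPhi v) (Subalgebra.toSubmodule Alg) with hWdef
  have hvW : v ∈ W := ⟨1, (Subalgebra.mem_toSubmodule Alg).mpr (one_mem Alg), mvB_one v⟩
  have hWinv : ∀ j, ∀ x ∈ W, blockL (A j) x ∈ W := by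
    rintro j x ⟨B, hB, rfl⟩
    refine ⟨A j * B, (Subalgebra.mem_toSubmodule Alg).mpr
      (mul_mem (hAlgA j) ((Subalgebra.mem_toSubmodule Alg).mp hB)), ?_⟩
    show mvB (A j * B) v = blockL (A j) (mvB B v)
    rw [mvB_mul]; rfl
  -- Step 1 : W = ⊤
  have hW : W = ⊤ := by
    by_contra hWne
    have hWlt : W < ⊤ := lt_top_iff_ne_top.mpr hWne
    haveI : Nontrivial (((k : Fin r) → Fin (nn k) → ℂ) ⧸ W) :=
      Submodule.Quotient.nontrivial_iff.mpr hWlt.ne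
    set Lb : Fin p → Module.End ℂ (((k : Fin r) → Fin (nn k) → ℂ) ⧸ W) :=
      fun j => Submodule.mapQ W W (blockL (A j)) (fun x hx => hWinv j x hx) with hLbdef
    have hLcomm : ∀ i j, blockL (A i) * blockL (A j) = blockL (A j) * blockL (A i) := by
      intro i j
      apply LinearMap.ext; intro x
      simp only [Module.End.mul_apply]
      show mvB (A i) (mvB (A j) x) = mvB (A j) (mvB (A i) x)
      rw [← mvB_mul, ← mvB_mul, hAcomm i j]
    have hLbcomm : ∀ i j, Lb i * Lb j = Lb j * Lb i := by
      intro i j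
      refine Submodule.linearMap_qext _ ?_
      apply LinearMap.ext; intro x
      simp only [LinearMap.comp_apply, Module.End.mul_apply, Submodule.mkQ_apply, hLbdef,
        Submodule.mapQ_apply]
      exact congrArg _ (by simpa only [Module.End.mul_apply] using LinearMap.ext_iff.mp (hLcomm i j) x)
    haveI : Nontrivial (Module.Dual ℂ (((k : Fin r) → Fin (nn k) → ℂ) ⧸ W)) := by
      obtain ⟨q0, hq0⟩ := exists_ne (0 : ((k : Fin r) → Fin (nn k) → ℂ) ⧸ W)
      have h2 : ¬ ∀ φ : Module.Dual ℂ (((k : Fin r) → Fin (nn k) → ℂ) ⧸ W), φ q0 = 0 := by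
        rw [Module.forall_dual_apply_eq_zero_iff]; exact hq0
      push_neg at h2
      obtain ⟨φ0, hφ0⟩ := h2
      exact ⟨⟨φ0, 0, fun h => hφ0 (by rw [h]; rfl)⟩⟩
    have hdcomm : ∀ i j, Commute ((Lb i).dualMap) ((Lb j).dualMap) := by
      intro i j
      apply LinearMap.ext; intro ψ
      apply LinearMap.ext; intro x
      simp only [Module.End.mul_apply, LinearMap.dualMap_apply]
      exact congrArg ψ (by simpa only [Module.End.mul_apply] using LinearMap.ext_iff.mp (hLbcomm j i) x)
    obtain ⟨ψ, hψ0, hψα⟩ := exists_common_eigenvector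
      (Module.Dual ℂ (((k : Fin r) → Fin (nn k) → ℂ) ⧸ W))
      (fun j => (Lb j).dualMap) hdcomm
    choose α hα using hψα
    set φ : ((k : Fin r) → Fin (nn k) → ℂ) →ₗ[ℂ] ℂ := ψ.comp W.mkQ with hφdef
    have hφW : ∀ w ∈ W, φ w = 0 := by
      intro w hw
      show ψ (W.mkQ w) = 0
      rw [show W.mkQ w = 0 from (Submodule.Quotient.mk_eq_zero W).mpr hw]
      exact map_zero ψ
    have hφ0 : φ ≠ 0 := by
      intro h
      apply hψ0
      apply LinearMap.ext; intro q
      obtain ⟨x, rfl⟩ := W.mkQ_surjective q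
      exact LinearMap.ext_iff.mp h x
    have hφL : ∀ j x, φ (mvB (A j) x) = α j * φ x := by
      intro j x
      have h1 : φ (mvB (A j) x) = ψ (Lb j (W.mkQ x)) := by
        show ψ (W.mkQ (blockL (A j) x)) = ψ (Lb j (W.mkQ x))
        exact congrArg ψ (Submodule.mapQ_apply (p := W) (q := W) (h := fun x hx => hWinv j x hx) (blockL (A j)) x).symm
      have h2 := LinearMap.ext_iff.mp (hα j) (W.mkQ x)
      rw [LinearMap.dualMap_apply] at h2
      rw [h1, h2, LinearMap.smul_apply, smul_eq_mul]
      rfl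
    -- find the block where φ lives
    have hk0 : ∃ k₀ : Fin r, φ.comp (LinearMap.single ℂ (fun k => Fin (nn k) → ℂ) k₀) ≠ 0 := by
      by_contra h
      push_neg at h
      apply hφ0
      apply LinearMap.ext; intro x
      have hx : x = ∑ k, Pi.single k (x k) := by
        funext k'
        rw [Finset.sum_apply]
        exact (Fintype.sum_pi_single k' x).symm
      rw [hx, map_sum]
      have : ∀ k, φ (Pi.single k (x k)) = 0 := by
        intro k
        have := LinearMap.ext_iff.mp (h k) (x k)
        simpa using this
      simp [this]
    obtain ⟨k₀, hφk⟩ := hk0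
    set φk : (Fin (nn k₀) → ℂ) →ₗ[ℂ] ℂ :=
      φ.comp (LinearMap.single ℂ (fun k => Fin (nn k) → ℂ) k₀) with hφkdef
    have hLsingle : ∀ (j : Fin p) (u : Fin (nn k₀) → ℂ),
        mvB (A j) (Pi.single k₀ u) = Pi.single k₀ ((A j k₀).mulVec u) := by
      intro j u; funext k
      by_cases hk : k = k₀
      · subst hk; simp [mvB]
      · simp [mvB, Pi.single_eq_of_ne hk, Matrix.mulVec_zero]
    have hφkA : ∀ (j : Fin p) (u : Fin (nn k₀) → ℂ),
        φk ((A j k₀).mulVec u) = α j * φk u := by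
      intro j u
      show φ (Pi.single k₀ ((A j k₀).mulVec u)) = α j * φ (Pi.single k₀ u)
      rw [← hLsingle, hφL]
    have hαμ : ∀ j, α j = μ j k₀ := by
      intro j
      by_contra hne
      set N : Matrix (Fin (nn k₀)) (Fin (nn k₀)) ℂ :=
        A j k₀ - α j • (1 : Matrix (Fin (nn k₀)) (Fin (nn k₀)) ℂ) with hN
      have hNdet : N.det ≠ 0 := by
        have htri : ∀ a b : Fin (nn k₀), a < b → N a b = 0 := by
          intro a b hab
          simp [hN, (hT j k₀).1 a b hab, Matrix.one_apply_ne (ne_of_lt hab)]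
        have hdet : N.det = ∏ i, N i i :=
          Matrix.det_of_lowerTriangular N
            (fun a b h => htri a b (by simpa using h))
        rw [hdet]
        refine Finset.prod_ne_zero_iff.mpr fun i _ => ?_
        have hNi : N i i = μ j k₀ - α j := by
          simp [hN, (hT j k₀).2 i ⟨0, hpos k₀⟩, hμdef]
        rw [hNi]
        exact sub_ne_zero.mpr fun h => hne h.symm
      have hkill : ∀ u, φk (N.mulVec u) = 0 := by
        intro u
        have hexp : N.mulVec u = (A j k₀).mulVec u - α j • u := by
          rw [hN, Matrix.sub_mulVec, Matrix.smul_mulVec, Matrix.one_mulVec]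
        rw [hexp, map_sub, _root_.map_smul, hφkA, smul_eq_mul]; ring
      apply hφk
      apply LinearMap.ext; intro u
      have hsurj : ∃ w, N.mulVec w = u := by
        refine ⟨(N⁻¹).mulVec u, ?_⟩
        rw [Matrix.mulVec_mulVec, Matrix.mul_nonsing_inv N (isUnit_iff_ne_zero.mpr hNdet),
          Matrix.one_mulVec]
      obtain ⟨w, rfl⟩ := hsurj
      exact hkill w
    -- obtain y with φ y ≠ 0 and use the limit-set hypothesis
    obtain ⟨y, hy⟩ : ∃ y, φ y ≠ 0 := by
      by_contra h; push_neg at h; exact hφ0 (LinearMap.ext h)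
    have hyJ : y ∈ JSetB A v := by rw [hJ]; trivial
    obtain ⟨xs, km, h1, h2, h3⟩ := hyJ
    set z : ℕ → (k : Fin r) → Fin (nn k) → ℂ :=
      fun m k => ((List.ofFn fun j => A j k ^ km m j).prod).mulVec (xs m k) with hzdef
    have hz : ∀ m, z m = mvB (PP A (km m)) (xs m) := by
      intro m; funext k
      show ((List.ofFn fun j => A j k ^ km m j).prod).mulVec (xs m k) = (PP A (km m) k).mulVec (xs m k)
      rw [PP_apply]
    set δ : ℕ → ℂ := fun m => ∏ j, μ j k₀ ^ km m j with hδdef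
    have hbm : ∀ m, z m k₀ ⟨0, hpos k₀⟩ = δ m * xs m k₀ ⟨0, hpos k₀⟩ := by
      intro m
      have e : z m k₀ = (PP A (km m) k₀).mulVec (xs m k₀) := by
        show ((List.ofFn fun j => A j k₀ ^ km m j).prod).mulVec (xs m k₀) = _
        rw [PP_apply]
      rw [e]
      exact (hPPD (km m) k₀).mulVec_zero' (hpos k₀) (xs m k₀)
    have h3k : Tendsto (fun m => z m k₀ ⟨0, hpos k₀⟩) atTop (𝓝 (y k₀ ⟨0, hpos k₀⟩)) :=
      tendsto_pi_nhds.mp (tendsto_pi_nhds.mp h3 k₀) ⟨0, hpos k₀⟩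
    have h2k : Tendsto (fun m => xs m k₀ ⟨0, hpos k₀⟩) atTop (𝓝 (v k₀ ⟨0, hpos k₀⟩)) :=
      tendsto_pi_nhds.mp (tendsto_pi_nhds.mp h2 k₀) ⟨0, hpos k₀⟩
    have hδlim : Tendsto δ atTop (𝓝 (y k₀ ⟨0, hpos k₀⟩ / v k₀ ⟨0, hpos k₀⟩)) := by
      have hev : ∀ᶠ m in atTop, xs m k₀ ⟨0, hpos k₀⟩ ≠ 0 := h2k.eventually_ne (hv k₀)
      have hdiv := h3k.div h2k (hv k₀)
      refine Tendsto.congr' ?_ hdiv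
      filter_upwards [hev] with m hm
      show z m k₀ ⟨0, hpos k₀⟩ / xs m k₀ ⟨0, hpos k₀⟩ = δ m
      rw [hbm m, mul_div_cancel_right₀ _ hm]
    have hφcont : Continuous φ := φ.continuous_of_finiteDimensional
    have hφz : Tendsto (fun m => φ (z m)) atTop (𝓝 (φ y)) := (hφcont.tendsto y).comp h3
    have hpowφ : ∀ (j : Fin p) (t : ℕ) (x : (k : Fin r) → Fin (nn k) → ℂ),
        φ (mvB (A j ^ t) x) = μ j k₀ ^ t * φ x := by
      intro j t
      induction t with
      | zero => intro x; rw [pow_zero, pow_zero, mvB_one, one_mul]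
      | succ t ih =>
        intro x
        rw [pow_succ, pow_succ, mvB_mul, ih, hφL, hαμ]
        ring
    have hφz' : ∀ m, φ (z m) = δ m * φ (xs m) := by
      intro m
      rw [hz m]
      exact prop_ofFn_prod (fun B c => ∀ x, φ (mvB B x) = c * φ x)
        (fun x => by rw [mvB_one, one_mul])
        (fun a b c d ha hb x => by rw [mvB_mul, ha, hb]; ring)
        _ _ (fun j x => hpowφ j (km m j) x) (xs m)
    have hφv : φ v = 0 := hφW v hvW
    have hφxs : Tendsto (fun m => φ (xs m)) atTop (𝓝 0) := by
      have := (hφcont.tendsto v).comp h2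
      rwa [hφv] at this
    have hmullim : Tendsto (fun m => δ m * φ (xs m)) atTop
        (𝓝 ((y k₀ ⟨0, hpos k₀⟩ / v k₀ ⟨0, hpos k₀⟩) * 0)) := hδlim.mul hφxs
    rw [mul_zero] at hmullim
    have hφzlim : Tendsto (fun m => φ (z m)) atTop (𝓝 0) := by
      refine Tendsto.congr ?_ hmullim
      intro m; exact (hφz' m).symm
    exact hy (tendsto_nhds_unique hφz hφzlim)
  -- Step 2 : density of the orbit
  set ψ' : ↥(Subalgebra.toSubmodule Alg) →ₗ[ℂ] ((k : Fin r) → Fin (nn k) → ℂ) :=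
    (vecPhi v).comp (Subalgebra.toSubmodule Alg).subtype with hψ'def
  have hψ'range : LinearMap.range ψ' = W := by
    rw [hψ'def, LinearMap.range_comp, Submodule.range_subtype]
  obtain ⟨s₀, hs₀⟩ := ψ'.exists_rightInverse_of_surjective (by rw [hψ'range, hW])
  have hvne : v ≠ 0 := by
    intro h
    exact hv ⟨0, hr⟩ (by rw [h]; rfl)
  obtain ⟨g, hg⟩ : ∃ g : ((k : Fin r) → Fin (nn k) → ℂ) →ₗ[ℂ] ℂ, g v ≠ 0 := by
    by_contra h; push_neg at h
    exact hvne ((Module.forall_dual_apply_eq_zero_iff ℂ v).mp h)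
  set c : ((k : Fin r) → Fin (nn k) → ℂ) →ₗ[ℂ] ℂ := (g v)⁻¹ • g with hcdef
  have hc : c v = 1 := by
    rw [hcdef, LinearMap.smul_apply, smul_eq_mul, inv_mul_cancel₀ hg]
  set u1 : ↥(Subalgebra.toSubmodule Alg) :=
    ⟨(1 : (k : Fin r) → Matrix (Fin (nn k)) (Fin (nn k)) ℂ),
      (Subalgebra.mem_toSubmodule Alg).mpr (one_mem Alg)⟩ with hu1def
  set s : ((k : Fin r) → Fin (nn k) → ℂ) →ₗ[ℂ] ↥(Subalgebra.toSubmodule Alg) :=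
    s₀ + LinearMap.smulRight c (u1 - s₀ v) with hsdef
  have hψ'u1 : ψ' u1 = v := by
    show mvB 1 v = v
    exact mvB_one v
  have hs₀' : ∀ x, ψ' (s₀ x) = x := by
    intro x
    have := LinearMap.ext_iff.mp hs₀ x
    simpa using this
  have hsec : ∀ x, ψ' (s x) = x := by
    intro x
    rw [hsdef, LinearMap.add_apply, map_add, LinearMap.smulRight_apply, _root_.map_smul,
      map_sub, hψ'u1, hs₀' x, hs₀' v, sub_self, smul_zero, add_zero]
  have hsv : s v = u1 := by
    rw [hsdef, LinearMap.add_apply, LinearMap.smulRight_apply, hc, one_smul, add_sub_cancel]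
  -- now prove density
  intro y
  have hyJ : y ∈ JSetB A v := by rw [hJ]; trivial
  obtain ⟨xs, km, h1, h2, h3⟩ := hyJ
  set C : ℕ → ((k : Fin r) → Matrix (Fin (nn k)) (Fin (nn k)) ℂ) :=
    fun m => ((s (xs m) : ↥(Subalgebra.toSubmodule Alg)) :
      (k : Fin r) → Matrix (Fin (nn k)) (Fin (nn k)) ℂ) with hCdef
  have hCv : ∀ m, mvB (C m) v = xs m := fun m => hsec (xs m)
  have hCmem : ∀ m, C m ∈ Alg := fun m => (Subalgebra.mem_toSubmodule Alg).mp (s (xs m)).2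
  set P : ℕ → ((k : Fin r) → Matrix (Fin (nn k)) (Fin (nn k)) ℂ) :=
    fun m => PP A (km m) with hPdef
  set w : ℕ → ((k : Fin r) → Fin (nn k) → ℂ) := fun m => mvB (P m) v with hwdef
  set z : ℕ → ((k : Fin r) → Fin (nn k) → ℂ) := fun m => mvB (P m) (xs m) with hzdef
  have h3' : Tendsto z atTop (𝓝 y) := by
    refine Tendsto.congr ?_ h3
    intro m; funext k
    show ((List.ofFn fun j => A j k ^ km m j).prod).mulVec (xs m k) = (PP A (km m) k).mulVec (xs m k)
    rw [PP_apply]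
  have hzw : ∀ m, z m = mvB (C m) (w m) := by
    intro m
    calc z m = mvB (P m) (mvB (C m) v) := by rw [hCv]
    _ = mvB (P m * C m) v := (mvB_mul _ _ _).symm
    _ = mvB (C m * P m) v := by rw [hAlgComm (P m) (hPPmem (km m)) (C m) (hCmem m)]
    _ = mvB (C m) (mvB (P m) v) := mvB_mul _ _ _
  have hs_cont : Continuous fun x : (k : Fin r) → Fin (nn k) → ℂ =>
      ((s x : ↥(Subalgebra.toSubmodule Alg)) :
        (k : Fin r) → Matrix (Fin (nn k)) (Fin (nn k)) ℂ) := by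
    exact LinearMap.continuous_of_finiteDimensional
      (((Subalgebra.toSubmodule Alg).subtype).comp s)
  have hC1 : Tendsto C atTop (𝓝 (1 : (k : Fin r) → Matrix (Fin (nn k)) (Fin (nn k)) ℂ)) := by
    have hlim := (hs_cont.tendsto v).comp h2
    have hval : ((s v : ↥(Subalgebra.toSubmodule Alg)) :
        (k : Fin r) → Matrix (Fin (nn k)) (Fin (nn k)) ℂ) = 1 := by
      rw [hsv]
    rw [Function.comp_def] at hlim
    rw [← hval]
    exact hlim
  have hCk : ∀ k, Tendsto (fun m => C m k) atTop
      (𝓝 (1 : Matrix (Fin (nn k)) (Fin (nn k)) ℂ)) := by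
    intro k
    have := tendsto_pi_nhds.mp hC1 k
    simpa using this
  have hdet : ∀ k, Tendsto (fun m => (C m k).det) atTop (𝓝 1) := by
    intro k
    have hcont : Continuous fun Mx : Matrix (Fin (nn k)) (Fin (nn k)) ℂ => Mx.det :=
      continuous_id.matrix_det
    have := (hcont.tendsto _).comp (hCk k)
    simpa [Function.comp_def, Matrix.det_one] using this
  have hadj : ∀ k, Tendsto (fun m => (C m k).adjugate) atTop
      (𝓝 (1 : Matrix (Fin (nn k)) (Fin (nn k)) ℂ)) := by
    intro k
    have hcont : Continuous fun Mx : Matrix (Fin (nn k)) (Fin (nn k)) ℂ => Mx.adjugate :=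
      continuous_id.matrix_adjugate
    have := (hcont.tendsto _).comp (hCk k)
    simpa [Function.comp_def, Matrix.adjugate_one] using this
  have hwlim : Tendsto w atTop (𝓝 y) := by
    rw [tendsto_pi_nhds]
    intro k
    have hzk : Tendsto (fun m => z m k) atTop (𝓝 (y k)) := tendsto_pi_nhds.mp h3' k
    have hinv : Tendsto (fun m => ((C m k).det)⁻¹) atTop (𝓝 1) := by
      have := (hdet k).inv₀ one_ne_zero
      simpa using this
    have hmv : Tendsto (fun m => (C m k).adjugate.mulVec (z m k)) atTop (𝓝 (y k)) := by
      rw [tendsto_pi_nhds]; intro i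
      have hrfl : ∀ m, (C m k).adjugate.mulVec (z m k) i
          = ∑ l, (C m k).adjugate i l * z m k l := by
        intro m; simp [Matrix.mulVec, dotProduct]
      have hsum : Tendsto (fun m => ∑ l, (C m k).adjugate i l * z m k l) atTop
          (𝓝 (∑ l, (1 : Matrix (Fin (nn k)) (Fin (nn k)) ℂ) i l * y k l)) := by
        refine tendsto_finset_sum _ fun l _ => Tendsto.mul ?_ ?_
        · exact tendsto_pi_nhds.mp (tendsto_pi_nhds.mp (hadj k) i) l
        · exact tendsto_pi_nhds.mp hzk l
      have hval : (∑ l, (1 : Matrix (Fin (nn k)) (Fin (nn k)) ℂ) i l * y k l) = y k i := by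
        simp [Matrix.one_apply]
      rw [hval] at hsum
      exact Tendsto.congr (fun m => (hrfl m).symm) hsum
    have hFk : Tendsto (fun m => ((C m k).det)⁻¹ • ((C m k).adjugate.mulVec (z m k)))
        atTop (𝓝 (y k)) := by
      have := hinv.smul hmv
      simpa using this
    have hev : ∀ᶠ m in atTop, (C m k).det ≠ 0 := (hdet k).eventually_ne one_ne_zero
    refine Tendsto.congr' ?_ hFk
    filter_upwards [hev] with m hm
    show ((C m k).det)⁻¹ • ((C m k).adjugate.mulVec (z m k)) = w m k
    have hzmk : z m k = (C m k).mulVec (w m k) := by rw [hzw m]; rfl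
    rw [hzmk, Matrix.mulVec_mulVec, Matrix.adjugate_mul, Matrix.smul_mulVec,
      Matrix.one_mulVec, smul_smul, inv_mul_cancel₀ hm, one_smul]
  have hmem : ∀ᶠ m in atTop, w m ∈ {w : (k : Fin r) → Fin (nn k) → ℂ |
      ∃ B ∈ genSGB A, w = fun k => (B k).mulVec (v k)} := by
    filter_upwards [h1.eventually_gt_atTop 0] with m hm
    refine ⟨P m, ⟨km m, hm, ?_⟩, ?_⟩
    · funext k; rw [hPdef]; exact PP_apply A (km m) k
    · funext k; rfl
  exact mem_closure_of_tendsto hwlim hmem
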